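/- arXiv:1210.4949 — 3 statements merged into one kernel-verified Lean document; each statement's English description precedes it below -/
import Mathlib

section
/- Let M be an n×n matrix over RatFunc ℂ all of whose entries have intDegree ≤ 0, and let B be a nonempty proper subset of Fin n with complement I. Then M_II - X • 1 is invertible (so the isospectral reduction R(M;B) exists), and every entry of R(M;B) has intDegree ≤ 0. -/
/-
Measure degrees by the valuation at infinity `v`, so that `intDegree ≤ 0` means `v ≤ 1`: the
entries of `M` lie in the valuation ring. The matrix `N = M_II - X • 1` is then diagonally
dominant for `v`: its diagonal entries have valuation exactly `v X > 1`, all others at most `1`.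
By the ultrametric inequality the identity permutation dominates the Leibniz expansion, so
`v (det N) = (v X) ^ |I| ≠ 0`, whereas an entry of the adjugate is a determinant with one row of
valuation `≤ 1`, hence of valuation `≤ (v X) ^ (|I| - 1)`. So `N⁻¹` has entries of valuation
`≤ (v X)⁻¹ < 1`, and `R(M;B)` is built from entries of the valuation ring by ring operations.
-/

open Matrix

/-- The isospectral reduction of `M` over `B`, with interior index set `I = Bᶜ`:
`R(M;B) = M_BB - M_BI (M_II - X•1)⁻¹ M_IB`. -/
noncomputable def isoRed {α : Type} [Fintype α] [DecidableEq α]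
    (M : Matrix α α (RatFunc ℂ)) (B : Finset α) : Matrix ↥B ↥B (RatFunc ℂ) :=
  M.submatrix (Subtype.val : ↥B → α) (Subtype.val : ↥B → α) -
    M.submatrix (Subtype.val : ↥B → α) (Subtype.val : ↥Bᶜ → α) *
      (M.submatrix (Subtype.val : ↥Bᶜ → α) (Subtype.val : ↥Bᶜ → α) -
        (RatFunc.X : RatFunc ℂ) • 1)⁻¹ *
      M.submatrix (Subtype.val : ↥Bᶜ → α) (Subtype.val : ↥B → α)

open Finset

namespace Valuation

variable {R K Γ₀ : Type*} [CommRing R] [Field K] [LinearOrderedCommGroupWithZero Γ₀]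
variable {ι : Type*}

lemma map_apply_le_of_map_diag_eq (v : Valuation R Γ₀) {N : Matrix ι ι R} {g : Γ₀}
    (hdiag : ∀ i, v (N i i) = g) (hoff : ∀ i j, i ≠ j → v (N i j) < g) (i j : ι) :
    v (N i j) ≤ g := by
  rcases eq_or_ne i j with rfl | hij
  exacts [(hdiag i).le, (hoff i j hij).le]

variable [Fintype ι] [DecidableEq ι]

lemma map_det_le_prod (v : Valuation R Γ₀) {P : Matrix ι ι R} {b : ι → Γ₀}
    (h : ∀ i j, v (P i j) ≤ b i) : v P.det ≤ ∏ i, b i := by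
  rw [det_apply']
  refine v.map_sum_le fun σ _ => ?_
  rw [map_mul, map_prod]
  calc v (Equiv.Perm.sign σ : R) * ∏ i, v (P (σ i) i)
      ≤ 1 * ∏ i, b (σ i) :=
        mul_le_mul' (intCast_mem v.integer _) (prod_le_prod' fun i _ => h _ _)
    _ = ∏ i, b i := by rw [one_mul, Equiv.prod_comp σ b]

lemma map_adjugate_apply_le_prod (v : Valuation R Γ₀) {N : Matrix ι ι R} {b : ι → Γ₀}
    (h : ∀ i j, v (N i j) ≤ b i) (i j : ι) :
    v (N.adjugate i j) ≤ ∏ r ∈ univ.erase j, b r := by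
  rw [adjugate_apply, ← sdiff_singleton_eq_erase, ← one_mul (∏ r ∈ _, b r),
    ← prod_update_of_mem (mem_univ j)]
  refine v.map_det_le_prod fun r c => ?_
  rcases eq_or_ne r j with rfl | hr
  · rw [updateRow_self, Function.update_self, Pi.single_apply]
    split_ifs <;> simp
  · rw [updateRow_ne hr, Function.update_of_ne hr]
    exact h r c

lemma map_det_of_map_diag_eq (v : Valuation R Γ₀) {N : Matrix ι ι R} {g : Γ₀} (hg : g ≠ 0)
    (hdiag : ∀ i, v (N i i) = g) (hoff : ∀ i j, i ≠ j → v (N i j) < g) :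
    v N.det = g ^ Fintype.card ι := by
  have hterm : ∀ σ : Equiv.Perm ι, v (Equiv.Perm.sign σ * ∏ i, N (σ i) i : R)
      = ∏ i, v (N (σ i) i) := fun σ => by
    rcases Int.units_eq_one_or (Equiv.Perm.sign σ) with h | h <;> simp [h]
  have hid : ∏ i, v (N ((1 : Equiv.Perm ι) i) i) = g ^ Fintype.card ι := by simp [hdiag]
  rw [det_apply', ← add_sum_erase _ _ (mem_univ 1), v.map_add_eq_of_lt_left] <;>
    rw [hterm, hid]
  refine v.map_sum_lt (pow_ne_zero _ hg) fun σ hσ => ?_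
  rw [hterm]
  obtain ⟨k, hk⟩ : ∃ k, σ k ≠ k :=
    not_forall.mp fun h => (ne_of_mem_erase hσ) (Equiv.ext h)
  have hrest : ∏ i ∈ univ.erase k, v (N (σ i) i) ≤ ∏ i ∈ univ.erase k, g :=
    prod_le_prod' fun i _ => v.map_apply_le_of_map_diag_eq hdiag hoff _ _
  calc ∏ i, v (N (σ i) i)
      = v (N (σ k) k) * ∏ i ∈ univ.erase k, v (N (σ i) i) :=
        (mul_prod_erase _ _ (mem_univ k)).symm
    _ < g * ∏ i ∈ univ.erase k, g :=
        (mul_le_mul_right hrest _).trans_lt (mul_lt_mul_of_pos_right (hoff _ _ hk)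
          (zero_lt_iff.mpr (prod_ne_zero_iff.mpr fun _ _ => hg)))
    _ = g ^ Fintype.card ι := by
        rw [mul_prod_erase _ (fun _ => g) (mem_univ k), prod_const, card_univ]

lemma map_inv_apply_le_of_map_diag_eq (v : Valuation K Γ₀) {N : Matrix ι ι K} {g : Γ₀}
    (hg : g ≠ 0) (hdiag : ∀ i, v (N i i) = g) (hoff : ∀ i j, i ≠ j → v (N i j) < g)
    (i j : ι) : v (N⁻¹ i j) ≤ g⁻¹ := by
  rw [Matrix.inv_def, Matrix.smul_apply, smul_eq_mul, map_mul, Ring.inverse_eq_inv', map_inv₀,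
    v.map_det_of_map_diag_eq hg hdiag hoff, ← card_univ, ← prod_const,
    ← mul_prod_erase univ (fun _ => g) (mem_univ j), mul_inv, mul_assoc]
  calc g⁻¹ * ((∏ r ∈ univ.erase j, g)⁻¹ * v (N.adjugate i j))
      ≤ g⁻¹ * ((∏ r ∈ univ.erase j, g)⁻¹ * ∏ r ∈ univ.erase j, g) := by
        gcongr
        exact v.map_adjugate_apply_le_prod (v.map_apply_le_of_map_diag_eq hdiag hoff) i j
    _ = g⁻¹ := by rw [inv_mul_cancel₀ (prod_ne_zero_iff.mpr fun _ _ => hg), mul_one]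

lemma isUnit_sub_smul_one_and_inv_mem_integer (v : Valuation K Γ₀) {A : Matrix ι ι K}
    (hA : ∀ i j, A i j ∈ v.integer) {x : K} (hx : 1 < v x) :
    IsUnit (A - x • 1) ∧ ∀ i j, (A - x • 1)⁻¹ i j ∈ v.integer := by
  have hx₀ : v x ≠ 0 := (zero_lt_one.trans hx).ne'
  have hdiag : ∀ i, v ((A - x • 1) i i) = v x := fun i => by
    rw [Matrix.sub_apply, Matrix.smul_apply, one_apply_eq, smul_eq_mul, mul_one,
      v.map_sub_eq_of_lt_right ((hA i i).trans_lt hx)]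
  have hoff : ∀ i j, i ≠ j → v ((A - x • 1) i j) < v x := fun i j hij => by
    rw [Matrix.sub_apply, Matrix.smul_apply, one_apply_ne hij, smul_zero, sub_zero]
    exact (hA i j).trans_lt hx
  refine ⟨?_, fun i j => ?_⟩
  · rw [isUnit_iff_isUnit_det, isUnit_iff_ne_zero, ← v.ne_zero_iff,
      v.map_det_of_map_diag_eq hx₀ hdiag hoff]
    exact pow_ne_zero _ hx₀
  · exact (v.map_inv_apply_le_of_map_diag_eq hx₀ hdiag hoff i j).trans
      (inv_le_one_of_one_le₀ hx.le)

end Valuation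

lemma RatFunc.mem_integer_inftyValuation_iff {F : Type*} [Field F] [DecidableEq (RatFunc F)]
    {x : RatFunc F} : x ∈ (inftyValuation F).integer ↔ x.intDegree ≤ 0 := by
  rcases eq_or_ne x 0 with rfl | hx
  · simp
  · rw [Valuation.mem_integer_iff, inftyValuation_apply, inftyValuation_of_nonzero F hx,
      ← WithZero.exp_zero, WithZero.exp_le_exp]

theorem isoRed_exists_and_intDegree_le_zero_general {n : ℕ}
    (M : Matrix (Fin n) (Fin n) (RatFunc ℂ))
    (hdeg : ∀ i j, (M i j).intDegree ≤ 0)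
    (B : Finset (Fin n)) :
    IsUnit (M.submatrix (Subtype.val : ↥Bᶜ → Fin n) (Subtype.val : ↥Bᶜ → Fin n) -
      (RatFunc.X : RatFunc ℂ) • 1) ∧
    ∀ i j, ((isoRed M B) i j).intDegree ≤ 0 := by
  classical
  have hinteger (x : RatFunc ℂ) :
      x ∈ (RatFunc.inftyValuation ℂ).integer ↔ x.intDegree ≤ 0 :=
    RatFunc.mem_integer_inftyValuation_iff
  have hM (i j) : M i j ∈ (RatFunc.inftyValuation ℂ).integer := (hinteger _).mpr (hdeg i j)
  have hX : 1 < RatFunc.inftyValuation ℂ RatFunc.X := by simp [← WithZero.exp_zero]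
  obtain ⟨hunit, hinv⟩ := (RatFunc.inftyValuation ℂ).isUnit_sub_smul_one_and_inv_mem_integer
    (A := M.submatrix (Subtype.val : ↥Bᶜ → Fin n) Subtype.val) (fun i j => hM _ _) hX
  refine ⟨hunit, fun i j => (hinteger _).mp ?_⟩
  simp only [isoRed, Matrix.sub_apply, Matrix.mul_apply, submatrix_apply]
  exact sub_mem (hM _ _)
    (sum_mem fun k _ => mul_mem (sum_mem fun l _ => mul_mem (hM _ _) (hinv _ _)) (hM _ _))

theorem isoRed_exists_and_intDegree_le_zero {n : ℕ}
    (M : Matrix (Fin n) (Fin n) (RatFunc ℂ))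
    (hdeg : ∀ i j, (M i j).intDegree ≤ 0)
    (B : Finset (Fin n)) (hB : B.Nonempty) (hBproper : B ≠ Finset.univ) :
    IsUnit (M.submatrix (Subtype.val : ↥Bᶜ → Fin n) (Subtype.val : ↥Bᶜ → Fin n) -
      (RatFunc.X : RatFunc ℂ) • 1) ∧
    ∀ i j, ((isoRed M B) i j).intDegree ≤ 0 :=
  isoRed_exists_and_intDegree_le_zero_general M hdeg B
end

section
/- Let M be an n×n matrix over RatFunc ℂ all of whose entries have intDegree ≤ 0, and let B₁ ⊇ B₂ ⊇ ... ⊇ B_m be a decreasing chain of subsets of Fin n with B_m nonempty. Then the sequential isospectral reduction R(M; B₁, ..., B_m) := R(... R(R(M;B₁); B₂) ...; B_m), where at each step the reduction is taken over the copy of the next index set B_{k+1} inside the index subtype of the current reduced matrix, equals the single reduction R(M; B_m), after identifying the iterated subtypes with the subtype of B_m via the canonical equivalences. -/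
set_option synthInstance.maxHeartbeats 1000000
set_option maxHeartbeats 1000000

open Matrix

/-- The canonical equivalence between the copy of `C` inside the subtype of `B`
(for `C ⊆ B`) and the subtype of `C`. -/
def copyEquiv {α : Type} [Fintype α] [DecidableEq α] {B C : Finset α} (h : C ⊆ B) :
    ↥(Finset.univ.filter (fun x : ↥B => x.val ∈ C)) ≃ ↥C where
  toFun x := ⟨x.1.1, (Finset.mem_filter.mp x.2).2⟩
  invFun y := ⟨⟨y.1, h y.2⟩, Finset.mem_filter.mpr ⟨Finset.mem_univ _, y.2⟩⟩
  left_inv _ := Subtype.ext (Subtype.ext rfl)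
  right_inv _ := rfl

/-- One step of a sequential reduction: reduce a matrix indexed by the subtype of `B`
over the copy of `C ⊆ B` inside that subtype, and identify the resulting index type
with the subtype of `C` via the canonical equivalence. -/
noncomputable def redStep {α : Type} [Fintype α] [DecidableEq α] {B : Finset α}
    (A : Matrix ↥B ↥B (RatFunc ℂ)) (C : Finset α) (h : C ⊆ B) :
    Matrix ↥C ↥C (RatFunc ℂ) :=
  Matrix.reindex (copyEquiv h) (copyEquiv h)
    (isoRed A (Finset.univ.filter (fun x : ↥B => x.val ∈ C)))

/-- The sequential isospectral reduction `R(M; B₀, …, B_m)` of `M` over a decreasing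
chain `B₀ ⊇ B₁ ⊇ ⋯ ⊇ B_m` of index sets. -/
noncomputable def seqRed {n : ℕ} (M : Matrix (Fin n) (Fin n) (RatFunc ℂ)) :
    (m : ℕ) → (B : Fin (m + 1) → Finset (Fin n)) →
    (∀ k : Fin m, B k.succ ⊆ B k.castSucc) →
    Matrix ↥(B (Fin.last m)) ↥(B (Fin.last m)) (RatFunc ℂ)
  | 0, B, _ => isoRed M (B (Fin.last 0))
  | m + 1, B, h =>
      redStep
        (seqRed M m (fun k => B k.castSucc)
          (fun k => by
            have hk := h k.castSucc
            rwa [Fin.succ_castSucc] at hk))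
        (B (Fin.last (m + 1)))
        (by
          have hl := h (Fin.last m)
          rwa [Fin.succ_last] at hl)

/-!
Put `N = M - X • 1`. The entries of `M` lie in the valuation ring `O` of the place at infinity and
`X` does not, so `N = -X • (1 - X⁻¹ • M)` where `det (1 - X⁻¹ • M) ≡ 1` modulo the maximal ideal
of `O`: every principal submatrix of `N` is invertible with inverse over `O`, and reduced matrices
again have entries in `O`. The block inverse formula then identifies `(R(M;B) - X • 1)⁻¹` with the
`B × B` block of `N⁻¹`. As the `C × C` block of the `B × B` block of `N⁻¹` is its `C × C` block,
reducing over `B` and then over `C ⊆ B` is reducing over `C`.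
-/

namespace Matrix

theorem mul_apply_mem {R S : Type*} [Semiring R] [SetLike S R] [SubsemiringClass S R]
    {s : S} {l m n : Type*} [Fintype m] {P : Matrix l m R} {Q : Matrix m n R}
    (hP : ∀ i j, P i j ∈ s) (hQ : ∀ i j, Q i j ∈ s) (i : l) (j : n) : (P * Q) i j ∈ s :=
  sum_mem fun k _ => mul_mem (hP i k) (hQ k j)

variable {R : Type*} [CommRing R] {ι α l m : Type*}

theorem isUnit_det_one_sub_smul [Fintype ι] [DecidableEq ι] [IsLocalRing R] {t : R}
    (ht : t ∈ IsLocalRing.maximalIdeal R) (A : Matrix ι ι R) : IsUnit (1 - t • A).det := by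
  have ht0 : IsLocalRing.residue R t = 0 := (IsLocalRing.residue_eq_zero_iff t).2 ht
  have h : (IsLocalRing.residue R).mapMatrix (1 - t • A) = 1 := by
    ext i j
    simp [one_apply, ht0]
  rw [← isUnit_map_iff (IsLocalRing.residue R), RingHom.map_det, h, det_one]
  exact isUnit_one

theorem submatrix_one_eq_zero [DecidableEq α] {r : l → α} {c : m → α} (h : ∀ i j, r i ≠ c j) :
    (1 : Matrix α α R).submatrix r c = 0 := by
  ext i j
  simp [h i j]

theorem submatrix_sub_smul_one_of_injective [DecidableEq α] (A : Matrix α α R) (x : R)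
    [DecidableEq l] {e : l → α} (he : Function.Injective e) :
    (A - x • 1).submatrix e e = A.submatrix e e - x • 1 := by
  change A.submatrix e e - x • (1 : Matrix α α R).submatrix e e = _
  rw [submatrix_one _ he]

theorem submatrix_sub_smul_one_of_ne [DecidableEq α] (A : Matrix α α R) (x : R) {r : l → α}
    {c : m → α} (h : ∀ i j, r i ≠ c j) : (A - x • 1).submatrix r c = A.submatrix r c := by
  change A.submatrix r c - x • (1 : Matrix α α R).submatrix r c = _
  rw [submatrix_one_eq_zero h, smul_zero, sub_zero]

theorem submatrix_mul_eq_add_compl [Fintype α] [DecidableEq α] (P : Matrix l α R)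
    (N : Matrix α m R) (B : Finset α) {l' m' : Type*} (r : l' → l) (c : m' → m) :
    (P * N).submatrix r c =
      P.submatrix r (Subtype.val : B → α) * N.submatrix (Subtype.val : B → α) c +
        P.submatrix r (Subtype.val : ↥Bᶜ → α) * N.submatrix (Subtype.val : ↥Bᶜ → α) c := by
  ext i j
  simp only [add_apply, mul_apply, submatrix_apply]
  rw [Finset.sum_coe_sort B (fun k => P (r i) k * N k (c j)),
    Finset.sum_coe_sort Bᶜ (fun k => P (r i) k * N k (c j)), Finset.sum_add_sum_compl]

theorem submatrix_nonsing_inv_mul_schur [Fintype α] [DecidableEq α] (N : Matrix α α R)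
    (B : Finset α) (hN : IsUnit N.det)
    (hI : IsUnit (N.submatrix (Subtype.val : ↥Bᶜ → α) (Subtype.val : ↥Bᶜ → α)).det) :
    N⁻¹.submatrix (Subtype.val : B → α) (Subtype.val : B → α) *
        (N.submatrix (Subtype.val : B → α) (Subtype.val : B → α) -
          N.submatrix (Subtype.val : B → α) (Subtype.val : ↥Bᶜ → α) *
            (N.submatrix (Subtype.val : ↥Bᶜ → α) (Subtype.val : ↥Bᶜ → α))⁻¹ *
              N.submatrix (Subtype.val : ↥Bᶜ → α) (Subtype.val : B → α)) = 1 := by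
  set vB := (Subtype.val : B → α)
  set vI := (Subtype.val : ↥Bᶜ → α)
  set P := N⁻¹
  have hPN : P * N = 1 := nonsing_inv_mul N hN
  have h₁ : P.submatrix vB vB * N.submatrix vB vB + P.submatrix vB vI * N.submatrix vI vB = 1 := by
    rw [← submatrix_mul_eq_add_compl, hPN, submatrix_one _ Subtype.val_injective]
  have h₂ : P.submatrix vB vB * N.submatrix vB vI + P.submatrix vB vI * N.submatrix vI vI = 0 := by
    rw [← submatrix_mul_eq_add_compl, hPN]
    exact submatrix_one_eq_zero fun i j => ne_of_mem_of_not_mem i.2 (Finset.mem_compl.1 j.2)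
  have hPBI : P.submatrix vB vI =
      -(P.submatrix vB vB * N.submatrix vB vI * (N.submatrix vI vI)⁻¹) := by
    rw [eq_neg_iff_add_eq_zero, ← mul_nonsing_inv_cancel_right _ (P.submatrix vB vI) hI,
      ← Matrix.add_mul, add_comm, h₂, Matrix.zero_mul]
  rw [← h₁, hPBI]
  simp only [Matrix.neg_mul, Matrix.mul_assoc, sub_eq_add_neg, Matrix.mul_add, Matrix.mul_neg]

end Matrix

namespace ValuationSubring

variable {K : Type*} [Field K] (O : ValuationSubring K) {ι : Type*} [Fintype ι] [DecidableEq ι]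

theorem exists_sub_smul_one_mul_map_eq_one {A : Matrix ι ι K} (hA : ∀ i j, A i j ∈ O) {x : K}
    (hx : x ∉ O) : ∃ W : Matrix ι ι O, (A - x • 1) * W.map O.subtype = 1 := by
  have hnu : x⁻¹ ∈ O.nonunits := O.inv_mem_nonunits_iff.2 (Or.inr hx)
  have hx0 : x ≠ 0 := fun h => hx (h ▸ O.zero_mem)
  set t : O := ⟨x⁻¹, O.nonunits_le hnu⟩
  set N : Matrix ι ι O := 1 - t • Matrix.of fun i j => ⟨A i j, hA i j⟩
  have hN : IsUnit N.det := Matrix.isUnit_det_one_sub_smul (O.coe_mem_nonunits_iff.1 hnu) _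
  have hNK : A - x • 1 = (-x) • N.map O.subtype := by
    ext i j
    rcases eq_or_ne i j with rfl | hij
    · simp [N, t, mul_sub, hx0]
      ring
    · simp [N, t, hij, hx0]
  refine ⟨(-t) • N⁻¹, ?_⟩
  have hWK : ((-t) • N⁻¹).map O.subtype = (-x⁻¹) • N⁻¹.map O.subtype := by
    ext i j
    simp [t]
  rw [hNK, hWK, Matrix.smul_mul, Matrix.mul_smul, smul_smul, neg_mul_neg, mul_inv_cancel₀ hx0,
    one_smul, ← Matrix.map_mul, Matrix.mul_nonsing_inv _ hN]
  exact Matrix.map_one _ (map_zero _) (map_one _)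

theorem isUnit_det_sub_smul_one {A : Matrix ι ι K} (hA : ∀ i j, A i j ∈ O) {x : K} (hx : x ∉ O) :
    IsUnit (A - x • 1).det :=
  let ⟨_, hW⟩ := O.exists_sub_smul_one_mul_map_eq_one hA hx
  Matrix.isUnit_det_of_right_inverse hW

theorem nonsing_inv_sub_smul_one_mem {A : Matrix ι ι K} (hA : ∀ i j, A i j ∈ O) {x : K}
    (hx : x ∉ O) (i j : ι) : (A - x • 1)⁻¹ i j ∈ O := by
  obtain ⟨W, hW⟩ := O.exists_sub_smul_one_mul_map_eq_one hA hx
  rw [Matrix.inv_eq_right_inv hW]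
  exact (W i j).2

end ValuationSubring

namespace RatFunc

variable {F : Type*} [Field F] [DecidableEq (RatFunc F)]

theorem mem_inftyValuation_valuationSubring_iff (w : RatFunc F) :
    w ∈ (inftyValuation F).valuationSubring ↔ w.intDegree ≤ 0 := by
  rw [Valuation.mem_valuationSubring_iff, inftyValuation_apply, inftyValuationDef]
  split_ifs with hw
  · simp [hw]
  · rw [← WithZero.exp_zero, WithZero.exp_le_exp]

theorem X_notMem_inftyValuation_valuationSubring :
    (X : RatFunc F) ∉ (inftyValuation F).valuationSubring := by
  rw [Valuation.mem_valuationSubring_iff, inftyValuation.X, ← WithZero.exp_zero,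
    WithZero.exp_le_exp]
  norm_num

end RatFunc

section IsoRed

open RatFunc

variable {α : Type} [Fintype α] [DecidableEq α] {O : ValuationSubring (RatFunc ℂ)}
  {M : Matrix α α (RatFunc ℂ)}

theorem isoRed_mem (hX : (X : RatFunc ℂ) ∉ O) (hM : ∀ i j, M i j ∈ O) (B : Finset α) (i j : B) :
    isoRed M B i j ∈ O := by
  rw [isoRed, Matrix.sub_apply]
  exact sub_mem (hM _ _) <| Matrix.mul_apply_mem (Matrix.mul_apply_mem (fun _ _ => hM _ _)
    (O.nonsing_inv_sub_smul_one_mem (fun _ _ => hM _ _) hX)) (fun _ _ => hM _ _) i j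

theorem nonsing_inv_submatrix_mul_isoRed_sub_smul_one (hX : (X : RatFunc ℂ) ∉ O)
    (hM : ∀ i j, M i j ∈ O) (B : Finset α) :
    (M - (X : RatFunc ℂ) • 1)⁻¹.submatrix (Subtype.val : B → α) (Subtype.val : B → α) *
      (isoRed M B - (X : RatFunc ℂ) • 1) = 1 := by
  have key := Matrix.submatrix_nonsing_inv_mul_schur (M - (X : RatFunc ℂ) • 1) B
    (O.isUnit_det_sub_smul_one hM hX) (by
      rw [Matrix.submatrix_sub_smul_one_of_injective _ _ Subtype.val_injective]
      exact O.isUnit_det_sub_smul_one (fun _ _ => hM _ _) hX)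
  rwa [Matrix.submatrix_sub_smul_one_of_ne (r := (Subtype.val : B → α))
      (c := (Subtype.val : ↥Bᶜ → α)) _ _
      fun i j => ne_of_mem_of_not_mem i.2 (Finset.mem_compl.1 j.2),
    Matrix.submatrix_sub_smul_one_of_ne (r := (Subtype.val : ↥Bᶜ → α))
      (c := (Subtype.val : B → α)) _ _
      fun i j => (ne_of_mem_of_not_mem j.2 (Finset.mem_compl.1 i.2)).symm,
    Matrix.submatrix_sub_smul_one_of_injective _ _ Subtype.val_injective,
    Matrix.submatrix_sub_smul_one_of_injective _ _ Subtype.val_injective,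
    sub_right_comm, ← isoRed] at key

theorem inv_isoRed_sub_smul_one (hX : (X : RatFunc ℂ) ∉ O) (hM : ∀ i j, M i j ∈ O)
    (B : Finset α) :
    (isoRed M B - (X : RatFunc ℂ) • 1)⁻¹ =
      (M - (X : RatFunc ℂ) • 1)⁻¹.submatrix (Subtype.val : B → α) (Subtype.val : B → α) :=
  Matrix.inv_eq_left_inv (nonsing_inv_submatrix_mul_isoRed_sub_smul_one hX hM B)

theorem isoRed_eq_inv_submatrix_inv_add (hX : (X : RatFunc ℂ) ∉ O) (hM : ∀ i j, M i j ∈ O)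
    (B : Finset α) :
    isoRed M B = ((M - (X : RatFunc ℂ) • 1)⁻¹.submatrix (Subtype.val : B → α)
      (Subtype.val : B → α))⁻¹ + (X : RatFunc ℂ) • 1 := by
  rw [Matrix.inv_eq_right_inv (nonsing_inv_submatrix_mul_isoRed_sub_smul_one hX hM B),
    sub_add_cancel]

theorem redStep_isoRed (hX : (X : RatFunc ℂ) ∉ O) (hM : ∀ i j, M i j ∈ O) {B C : Finset α}
    (h : C ⊆ B) :
    redStep (isoRed M B) C h = isoRed M C := by
  rw [redStep, isoRed_eq_inv_submatrix_inv_add hX (isoRed_mem hX hM B),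
    inv_isoRed_sub_smul_one hX hM, isoRed_eq_inv_submatrix_inv_add hX hM C, Matrix.reindex_apply,
    Matrix.submatrix_add, Pi.add_apply, Pi.add_apply, ← Matrix.inv_submatrix_equiv,
    Matrix.submatrix_smul, Pi.smul_apply, Pi.smul_apply, Matrix.submatrix_one_equiv]
  rfl

end IsoRed

theorem seqRed_eq_isoRed_last_general {n : ℕ} (M : Matrix (Fin n) (Fin n) (RatFunc ℂ))
    (hdeg : ∀ i j, (M i j).intDegree ≤ 0)
    (m : ℕ) (B : Fin (m + 1) → Finset (Fin n))
    (hchain : ∀ k : Fin m, B k.succ ⊆ B k.castSucc) :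
    seqRed M m B hchain = isoRed M (B (Fin.last m)) := by
  classical
  have hM : ∀ i j, M i j ∈ (RatFunc.inftyValuation ℂ).valuationSubring := fun i j =>
    (RatFunc.mem_inftyValuation_valuationSubring_iff _).2 (hdeg i j)
  induction m with
  | zero => rfl
  | succ m ih =>
    rw [seqRed, ih]
    exact redStep_isoRed RatFunc.X_notMem_inftyValuation_valuationSubring hM _

theorem seqRed_eq_isoRed_last {n : ℕ} (M : Matrix (Fin n) (Fin n) (RatFunc ℂ))
    (hdeg : ∀ i j, (M i j).intDegree ≤ 0)
    (m : ℕ) (B : Fin (m + 1) → Finset (Fin n))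
    (hchain : ∀ k : Fin m, B k.succ ⊆ B k.castSucc)
    (hlast : (B (Fin.last m)).Nonempty) :
    seqRed M m B hchain = isoRed M (B (Fin.last m)) :=
  seqRed_eq_isoRed_last_general M hdeg m B hchain
end

section
/- Let M be an n×n matrix over RatFunc ℂ all of whose entries have intDegree ≤ 0, let B be a nonempty proper subset of Fin n with complement I, and set A := (M - X • 1)⁻¹. Then the submatrix A_II is invertible over RatFunc ℂ and the isospectral reduction of the spectral inverse satisfies R(S(M);B) = (A_BB - A_BI * A_II⁻¹ * A_IB) + X • 1, i.e. R(S(M);B) equals the Schur complement of A_II in A plus X • 1. -/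
set_option synthInstance.maxHeartbeats 1000000
set_option maxHeartbeats 1000000

open Matrix

/-- The spectral inverse of a square matrix over `RatFunc ℂ`:
`S(M) = (M - X•1)⁻¹ + X•1`. -/
noncomputable def specInv {α : Type} [Fintype α] [DecidableEq α]
    (M : Matrix α α (RatFunc ℂ)) : Matrix α α (RatFunc ℂ) :=
  (M - (RatFunc.X : RatFunc ℂ) • 1)⁻¹ + (RatFunc.X : RatFunc ℂ) • 1

/-! Write `N = M - X•1 = -X • (1 - X⁻¹ • M)`. The entries of `X⁻¹ • M` lie in the maximal ideal
of the valuation ring at infinity, so modulo that ideal `det (1 - X⁻¹ • M)` reduces to `1`; hence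
`N` is invertible, and likewise its principal block `N_BB = M_BB - X•1`. Block inversion of `N`
then shows that `A_II = (N⁻¹)_II` is the inverse of the Schur complement of `N_BB` in `N`. The
identity itself is formal: adding `X•1` to `A` leaves the off-diagonal blocks unchanged, and on
`I` it is cancelled by the `- X•1` in the reduction. -/

section
variable {α : Type*} [Fintype α] [DecidableEq α]

theorem Matrix.isUnit_det_one_sub_of_mem_maximalIdeal {R : Type*} [CommRing R] [IsLocalRing R]
    {E : Matrix α α R} (hE : ∀ i j, E i j ∈ IsLocalRing.maximalIdeal R) :
    IsUnit (1 - E).det := by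
  have hres : (1 - E).map (IsLocalRing.residue R) = 1 := by
    ext i j
    simp [one_apply, apply_ite, (IsLocalRing.residue_eq_zero_iff _).2 (hE i j)]
  rw [← IsLocalRing.residue_ne_zero_iff_isUnit, RingHom.map_det, RingHom.mapMatrix_apply, hres,
    det_one]
  exact one_ne_zero

theorem Matrix.isUnit_det_one_sub_of_valuation_lt_one {K Γ₀ : Type*} [Field K]
    [LinearOrderedCommGroupWithZero Γ₀] (v : Valuation K Γ₀) {E : Matrix α α K}
    (hE : ∀ i j, v (E i j) < 1) : IsUnit (1 - E).det := by
  let E' : Matrix α α v.valuationSubring := fun i j => ⟨E i j, (hE i j).le⟩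
  have hE' : ∀ i j, E' i j ∈ IsLocalRing.maximalIdeal v.valuationSubring := fun i j =>
    (ValuationSubring.valuation_lt_one_iff _ _).2 <|
      v.isEquiv_valuation_valuationSubring.lt_one_iff_lt_one.1 (hE i j)
  have hmap : (1 - E').map v.valuationSubring.subtype = 1 - E := by
    ext i j
    rw [map_apply, sub_apply, sub_apply, map_sub, one_apply, one_apply]
    split_ifs <;> simp [E']
  rw [← hmap, ← RingHom.mapMatrix_apply, ← RingHom.map_det]
  exact (isUnit_det_one_sub_of_mem_maximalIdeal hE').map _

theorem RatFunc.inftyValuation_le_one_of_intDegree_nonpos {F : Type*} [Field F]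
    [DecidableEq (RatFunc F)] {x : RatFunc F} (h : x.intDegree ≤ 0) :
    RatFunc.inftyValuation F x ≤ 1 := by
  rcases eq_or_ne x 0 with rfl | hx
  · simp
  · rw [RatFunc.inftyValuation_apply, RatFunc.inftyValuation_of_nonzero _ hx,
      ← WithZero.exp_zero, WithZero.exp_le_exp]
    exact h

theorem RatFunc.isUnit_det_sub_X_smul_one {F : Type*} [Field F] {P : Matrix α α (RatFunc F)}
    (hP : ∀ i j, (P i j).intDegree ≤ 0) : IsUnit (P - (RatFunc.X : RatFunc F) • 1).det := by
  classical
  set X : RatFunc F := RatFunc.X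
  have hX : X ≠ 0 := RatFunc.X_ne_zero
  have hfactor : P - X • 1 = (-X) • (1 - X⁻¹ • P) := by
    rw [smul_sub, smul_smul, neg_mul, mul_inv_cancel₀ hX, neg_smul, neg_smul, one_smul,
      sub_neg_eq_add, neg_add_eq_sub]
  rw [hfactor, det_smul]
  refine ((isUnit_iff_ne_zero.2 (neg_ne_zero.2 hX)).pow _).mul
    (isUnit_det_one_sub_of_valuation_lt_one (RatFunc.inftyValuation F) fun i j => ?_)
  calc RatFunc.inftyValuation F ((X⁻¹ • P) i j)
      = WithZero.exp (-1) * RatFunc.inftyValuation F (P i j) := by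
        rw [Matrix.smul_apply, smul_eq_mul, map_mul, map_inv₀, RatFunc.inftyValuation.X,
          WithZero.exp_neg]
    _ ≤ WithZero.exp (-1) * 1 :=
        mul_le_mul_right (RatFunc.inftyValuation_le_one_of_intDegree_nonpos (hP i j)) _
    _ < 1 := by rw [mul_one, ← WithZero.exp_zero, WithZero.exp_lt_exp]; norm_num

theorem Matrix.isUnit_toBlocks₂₂_inv {m n R : Type*} [Fintype m] [Fintype n] [DecidableEq m]
    [DecidableEq n] [CommRing R] {P : Matrix (m ⊕ n) (m ⊕ n) R} (hP : IsUnit P.det)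
    (h₁₁ : IsUnit P.toBlocks₁₁.det) : IsUnit P⁻¹.toBlocks₂₂ := by
  rw [← fromBlocks_toBlocks P] at hP ⊢
  let := invertibleOfIsUnitDet _ hP
  let := invertibleOfIsUnitDet _ h₁₁
  let := invertibleOfFromBlocks₁₁Invertible P.toBlocks₁₁ P.toBlocks₁₂ P.toBlocks₂₁ P.toBlocks₂₂
  rw [← invOf_eq_nonsing_inv, invOf_fromBlocks₁₁_eq, toBlocks_fromBlocks₂₂]
  exact isUnit_of_invertible _

theorem Matrix.isUnit_inv_submatrix_compl {R : Type*} [CommRing R] {N : Matrix α α R}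
    (B : Finset α) (hN : IsUnit N.det)
    (hB : IsUnit (N.submatrix (Subtype.val : B → α) (Subtype.val : B → α)).det) :
    IsUnit (N⁻¹.submatrix (Subtype.val : ↥Bᶜ → α) (Subtype.val : ↥Bᶜ → α)) := by
  let e : B ⊕ ↥Bᶜ ≃ α := (Equiv.sumCongr (Equiv.refl _)
    (Equiv.subtypeEquivRight fun _ => Finset.mem_compl)).trans (Equiv.sumCompl (· ∈ B))
  have := isUnit_toBlocks₂₂_inv (P := N.submatrix e e) (by rwa [det_submatrix_equiv_self]) hB
  rwa [inv_submatrix_equiv] at this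

end

theorem isoRed_add_X_smul_one {α : Type} [Fintype α] [DecidableEq α]
    (A : Matrix α α (RatFunc ℂ)) (B : Finset α) :
    isoRed (A + (RatFunc.X : RatFunc ℂ) • 1) B =
      A.submatrix (Subtype.val : ↥B → α) (Subtype.val : ↥B → α) -
        A.submatrix (Subtype.val : ↥B → α) (Subtype.val : ↥Bᶜ → α) *
          (A.submatrix (Subtype.val : ↥Bᶜ → α) (Subtype.val : ↥Bᶜ → α))⁻¹ *
          A.submatrix (Subtype.val : ↥Bᶜ → α) (Subtype.val : ↥B → α) +
        (RatFunc.X : RatFunc ℂ) • 1 := by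
  have hne : ∀ (b : B) (i : ↥Bᶜ), (b : α) ≠ i := fun b i h =>
    Finset.mem_compl.1 i.2 (h ▸ b.2)
  have h₁₂ : (1 : Matrix α α (RatFunc ℂ)).submatrix (Subtype.val : ↥B → α)
      (Subtype.val : ↥Bᶜ → α) = 0 := by
    ext b i; exact one_apply_ne (hne b i)
  have h₂₁ : (1 : Matrix α α (RatFunc ℂ)).submatrix (Subtype.val : ↥Bᶜ → α)
      (Subtype.val : ↥B → α) = 0 := by
    ext i b; exact one_apply_ne (hne b i).symm
  simp only [isoRed, submatrix_add, submatrix_smul, Pi.add_apply, Pi.smul_apply, h₁₂, h₂₁,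
    submatrix_one _ Subtype.val_injective, smul_zero, add_zero, add_sub_cancel_right]
  abel

theorem isoRed_specInv_eq_schur_add_X_smul_one_general {n : ℕ}
    (M : Matrix (Fin n) (Fin n) (RatFunc ℂ))
    (hdeg : ∀ i j, (M i j).intDegree ≤ 0)
    (B : Finset (Fin n)) :
    IsUnit ((M - (RatFunc.X : RatFunc ℂ) • 1)⁻¹.submatrix
        (Subtype.val : ↥Bᶜ → Fin n) (Subtype.val : ↥Bᶜ → Fin n)) ∧
    isoRed (specInv M) B =
      ((M - (RatFunc.X : RatFunc ℂ) • 1)⁻¹.submatrix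
          (Subtype.val : ↥B → Fin n) (Subtype.val : ↥B → Fin n) -
        (M - (RatFunc.X : RatFunc ℂ) • 1)⁻¹.submatrix
          (Subtype.val : ↥B → Fin n) (Subtype.val : ↥Bᶜ → Fin n) *
          ((M - (RatFunc.X : RatFunc ℂ) • 1)⁻¹.submatrix
            (Subtype.val : ↥Bᶜ → Fin n) (Subtype.val : ↥Bᶜ → Fin n))⁻¹ *
          (M - (RatFunc.X : RatFunc ℂ) • 1)⁻¹.submatrix
            (Subtype.val : ↥Bᶜ → Fin n) (Subtype.val : ↥B → Fin n)) +
        (RatFunc.X : RatFunc ℂ) • 1 := by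
  have hBB : (M - (RatFunc.X : RatFunc ℂ) • 1).submatrix (Subtype.val : ↥B → Fin n)
      (Subtype.val : ↥B → Fin n) =
      M.submatrix Subtype.val Subtype.val - (RatFunc.X : RatFunc ℂ) • 1 := by
    simp only [submatrix_sub, submatrix_smul, Pi.sub_apply, Pi.smul_apply,
      submatrix_one _ Subtype.val_injective]
  refine ⟨isUnit_inv_submatrix_compl B (RatFunc.isUnit_det_sub_X_smul_one hdeg) ?_,
    isoRed_add_X_smul_one _ B⟩
  rw [hBB]
  exact RatFunc.isUnit_det_sub_X_smul_one fun i j => hdeg _ _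

theorem isoRed_specInv_eq_schur_add_X_smul_one {n : ℕ}
    (M : Matrix (Fin n) (Fin n) (RatFunc ℂ))
    (hdeg : ∀ i j, (M i j).intDegree ≤ 0)
    (B : Finset (Fin n)) (hB : B.Nonempty) (hBproper : B ≠ Finset.univ) :
    IsUnit ((M - (RatFunc.X : RatFunc ℂ) • 1)⁻¹.submatrix
        (Subtype.val : ↥Bᶜ → Fin n) (Subtype.val : ↥Bᶜ → Fin n)) ∧
    isoRed (specInv M) B =
      ((M - (RatFunc.X : RatFunc ℂ) • 1)⁻¹.submatrix
          (Subtype.val : ↥B → Fin n) (Subtype.val : ↥B → Fin n) -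
        (M - (RatFunc.X : RatFunc ℂ) • 1)⁻¹.submatrix
          (Subtype.val : ↥B → Fin n) (Subtype.val : ↥Bᶜ → Fin n) *
          ((M - (RatFunc.X : RatFunc ℂ) • 1)⁻¹.submatrix
            (Subtype.val : ↥Bᶜ → Fin n) (Subtype.val : ↥Bᶜ → Fin n))⁻¹ *
          (M - (RatFunc.X : RatFunc ℂ) • 1)⁻¹.submatrix
            (Subtype.val : ↥Bᶜ → Fin n) (Subtype.val : ↥B → Fin n)) +
        (RatFunc.X : RatFunc ℂ) • 1 :=
  isoRed_specInv_eq_schur_add_X_smul_one_general M hdeg B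
end
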